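/- Let V be uniformly distributed on the unit sphere S^{k−1} ⊂ ℝ^k, let δ ∈ (0, 1/√2] and k ≥ 2δ^{−2}. Then for any x ∈ S^{k−1}: P(|⟨V,x⟩| ≥ δ) ≥ exp(−2δ²k). -/

import Mathlib

open MeasureTheory Metric
open scoped RealInnerProductSpace

/-- The uniform probability measure on the unit sphere of `ℝᵏ`. -/
noncomputable def unifSphere (k : ℕ) :
    Measure (sphere (0 : EuclideanSpace ℝ (Fin k)) 1) :=
  (((volume : Measure (EuclideanSpace ℝ (Fin k))).toSphere) Set.univ)⁻¹ •
    (volume : Measure (EuclideanSpace ℝ (Fin k))).toSphere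

/-!
Write `k = n + 1`. The cone over the cap `{v | δ ≤ |⟪v, x⟫|}` contains the part of the unit ball
where `δ ≤ |⟪y, x⟫|`; slicing the ball perpendicular to `x` then bounds the probability of the cap
from below by `∫_{|t| ≥ δ} (1 - t²)^{n/2} dt / ∫ (1 - t²)^{n/2} dt`. The denominator is at most the
Gaussian integral `√(2π/n)`. The numerator is at least `(2/b) ∫_δ^b t (1 - t²)^{n/2} dt`, which is
computed exactly; `b` is chosen so that the boundary term at `b` is `e⁻²` times the one at `δ`.
What remains is an inequality between elementary functions of `n` and `δ²`, which holds because
`1 - u ≥ exp (-3u/2)` on `[0, 1/2]` and `kδ² ≥ 2`.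
-/

open Real Set
open scoped Pointwise ENNReal

lemma exp_neg_three_halves_mul_le_one_sub {u : ℝ} (hu0 : 0 ≤ u) (hu : u ≤ 1 / 2) :
    exp (-(3 / 2) * u) ≤ 1 - u := by
  have hchord := convexOn_exp.2 (mem_univ 0) (mem_univ (-3 / 4 : ℝ))
    (by linarith : 0 ≤ 1 - 2 * u) (by linarith : 0 ≤ 2 * u) (by ring)
  have h34 : exp (-3 / 4 : ℝ) ≤ 1 / 2 := by
    have := quadratic_le_exp_of_nonneg (x := 3 / 4) (by norm_num)
    rw [neg_div, exp_neg]
    exact inv_le_of_inv_le₀ (by norm_num) (by linarith)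
  simp only [smul_eq_mul, mul_zero, zero_add, exp_zero, mul_one] at hchord
  calc exp (-(3 / 2) * u) = exp (2 * u * (-3 / 4)) := by ring_nf
    _ ≤ 1 - 2 * u + 2 * u * exp (-3 / 4) := hchord
    _ ≤ 1 - u := by nlinarith

lemma linear_le_exp_five_halves {w : ℝ} (hw : 3 / 2 ≤ w) :
    2 * π * (25 / 9 * w + 20 / 3) ≤ 4 * (1 - exp (-2)) ^ 2 * exp (5 / 2 * w) := by
  have hTaylor : ∀ x : ℝ, 0 ≤ x → 1 + x + x ^ 2 / 2 + x ^ 3 / 6 + x ^ 4 / 24 ≤ exp x := by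
    intro x hx
    have := sum_le_exp_of_nonneg hx 5
    norm_num [Finset.sum_range_succ, Nat.factorial] at this
    linarith
  have hc : 6 / 7 ≤ 1 - exp (-2) := by
    have h7 : 7 ≤ exp 2 := by nlinarith [hTaylor 2 (by norm_num)]
    rw [exp_neg]
    have : (exp 2)⁻¹ ≤ 1 / 7 := by rw [one_div]; exact inv_anti₀ (by norm_num) h7
    linarith
  have hc2 : 144 / 49 ≤ 4 * (1 - exp (-2)) ^ 2 := by nlinarith
  have hπ : 2 * π * (25 / 9 * w + 20 / 3) ≤ 6.3 * (25 / 9 * w + 20 / 3) := by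
    have := pi_lt_d2
    gcongr
    linarith
  have hpoly : 6.3 * (25 / 9 * w + 20 / 3) ≤ 144 / 49 * (1 + 5 / 2 * w + (5 / 2 * w) ^ 2 / 2
      + (5 / 2 * w) ^ 3 / 6 + (5 / 2 * w) ^ 4 / 24) := by
    have hw' : 0 ≤ w - 3 / 2 := by linarith
    nlinarith [pow_nonneg hw' 2, pow_nonneg hw' 3, pow_nonneg hw' 4]
  calc 2 * π * (25 / 9 * w + 20 / 3) ≤ 144 / 49 * (1 + 5 / 2 * w + (5 / 2 * w) ^ 2 / 2
      + (5 / 2 * w) ^ 3 / 6 + (5 / 2 * w) ^ 4 / 24) := hπ.trans hpoly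
    _ ≤ 4 * (1 - exp (-2)) ^ 2 * exp (5 / 2 * w) :=
      mul_le_mul hc2 (hTaylor _ (by linarith)) (by positivity) (by positivity)

lemma exp_neg_mul_sqrt_two_pi_div_le {N u b : ℝ} (hN : 3 ≤ N) (hu0 : 0 < u) (hu : u ≤ 1 / 2)
    (hk : 2 ≤ u * (N + 1)) (hb0 : 0 ≤ b) (hb : b ^ 2 = u + 4 * (1 - u) / (N + 2)) :
    exp (-2 * u * (N + 1)) * √(2 * π / N) ≤
      2 * ((1 - exp (-2)) * (1 - u) ^ ((N + 2) / 2) / ((N + 2) * b)) := by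
  have hN0 : 0 < N := by linarith
  have hb0' : 0 < b := by
    have : 0 ≤ 4 * (1 - u) / (N + 2) := div_nonneg (by linarith) (by linarith)
    nlinarith
  have hc : 0 < 1 - exp (-2) := sub_pos.2 (exp_lt_one_iff.2 (by norm_num))
  have hpow : exp (-(3 / 4) * u * (N + 2)) ≤ (1 - u) ^ ((N + 2) / 2) := by
    calc exp (-(3 / 4) * u * (N + 2)) = exp (-(3 / 2) * u) ^ ((N + 2) / 2) := by
          rw [← exp_mul]; ring_nf
      _ ≤ (1 - u) ^ ((N + 2) / 2) :=
          rpow_le_rpow (exp_pos _).le (exp_neg_three_halves_mul_le_one_sub hu0.le hu)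
            (by linarith)
  have hsq : (√(2 * π / N) * ((N + 2) * b)) ^ 2
      ≤ (2 * (1 - exp (-2)) * exp (5 / 4 * (u * N))) ^ 2 := by
    have hw : 3 / 2 ≤ u * N := by nlinarith
    calc (√(2 * π / N) * ((N + 2) * b)) ^ 2
        = 2 * π * ((N + 2) ^ 2 * u + 4 * (1 - u) * (N + 2)) / N := by
          rw [mul_pow, mul_pow, sq_sqrt (by positivity), hb]
          field_simp
      _ ≤ 2 * π * (25 / 9 * (u * N) + 20 / 3) := by
          rw [div_le_iff₀ hN0]
          have h1 : (N + 2) ^ 2 * u ≤ 25 / 9 * N ^ 2 * u := by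
            gcongr; nlinarith
          have h2 : 4 * (1 - u) * (N + 2) ≤ 20 / 3 * N := by nlinarith
          nlinarith [pi_pos]
      _ ≤ 4 * (1 - exp (-2)) ^ 2 * exp (5 / 2 * (u * N)) := linear_le_exp_five_halves hw
      _ = (2 * (1 - exp (-2)) * exp (5 / 4 * (u * N))) ^ 2 := by
          rw [mul_pow, ← exp_nat_mul]; ring_nf
  have hlin := (pow_le_pow_iff_left₀ (by positivity) (by positivity) two_ne_zero).1 hsq
  rw [mul_div_assoc', le_div_iff₀ (by positivity)]
  calc exp (-2 * u * (N + 1)) * √(2 * π / N) * ((N + 2) * b)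
      = exp (-2 * u * (N + 1)) * (√(2 * π / N) * ((N + 2) * b)) := by ring
    _ ≤ exp (-2 * u * (N + 1)) * (2 * (1 - exp (-2)) * exp (5 / 4 * (u * N))) := by gcongr
    _ = 2 * (1 - exp (-2)) * exp (-2 * u * (N + 1) + 5 / 4 * (u * N)) := by
          rw [exp_add]; ring
    _ ≤ 2 * (1 - exp (-2)) * exp (-(3 / 4) * u * (N + 2)) := by
          gcongr; nlinarith
    _ ≤ 2 * ((1 - exp (-2)) * (1 - u) ^ ((N + 2) / 2)) := by
          rw [← mul_assoc]; gcongr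

lemma sqrt_pow_eq_rpow {a : ℝ} (ha : 0 ≤ a) (n : ℕ) : √a ^ n = a ^ ((n : ℝ) / 2) := by
  rw [sqrt_eq_rpow, ← rpow_natCast, ← rpow_mul ha]
  ring_nf

lemma integral_sqrt_one_sub_sq_pow_ge (n : ℕ) {a b : ℝ} (ha : 0 ≤ a) (hab : a ≤ b)
    (hb : b ≤ 1) :
    ((1 - a ^ 2) ^ (((n : ℝ) + 2) / 2) - (1 - b ^ 2) ^ (((n : ℝ) + 2) / 2)) / ((n + 2) * b)
      ≤ ∫ t in a..b, √(1 - t ^ 2) ^ n := by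
  have hcont : Continuous fun t : ℝ => √(1 - t ^ 2) ^ n := by fun_prop
  have hderiv : ∀ t ∈ uIcc a b,
      HasDerivAt (fun s : ℝ => -(1 - s ^ 2) ^ (((n : ℝ) + 2) / 2) / (n + 2))
        (t * √(1 - t ^ 2) ^ n) t := by
    intro t ht
    rw [uIcc_of_le hab] at ht
    have h1t : 0 ≤ 1 - t ^ 2 := by nlinarith [ht.1, ht.2]
    have h := (((hasDerivAt_pow 2 t).const_sub 1).rpow_const
      (p := ((n : ℝ) + 2) / 2) (Or.inr (by linarith [(n.cast_nonneg : (0 : ℝ) ≤ n)]))).neg.div_const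
      ((n : ℝ) + 2)
    refine h.congr_deriv ?_
    rw [sqrt_pow_eq_rpow h1t]
    have : ((n : ℝ) + 2) / 2 - 1 = n / 2 := by ring
    rw [this]
    field_simp
    push_cast
    ring
  have hFTC : ∫ t in a..b, t * √(1 - t ^ 2) ^ n
      = ((1 - a ^ 2) ^ (((n : ℝ) + 2) / 2) - (1 - b ^ 2) ^ (((n : ℝ) + 2) / 2)) / (n + 2) := by
    rw [intervalIntegral.integral_eq_sub_of_hasDerivAt hderiv
      ((continuous_id.mul hcont).intervalIntegrable a b)]
    ring
  calc ((1 - a ^ 2) ^ (((n : ℝ) + 2) / 2) - (1 - b ^ 2) ^ (((n : ℝ) + 2) / 2)) / ((n + 2) * b)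
      = ∫ t in a..b, t / b * √(1 - t ^ 2) ^ n := by
        simp_rw [div_mul_eq_mul_div, intervalIntegral.integral_div, hFTC, ← div_div]
    _ ≤ ∫ t in a..b, √(1 - t ^ 2) ^ n := by
        refine intervalIntegral.integral_mono_on hab
          (((continuous_id.div_const b).mul hcont).intervalIntegrable a b)
          (hcont.intervalIntegrable a b) fun t ht => ?_
        exact mul_le_of_le_one_left (by positivity)
          (div_le_one_of_le₀ ht.2 (ha.trans ht.1 |>.trans ht.2))

lemma integral_sqrt_one_sub_sq_pow_ge_of_sq_eq {n : ℕ} (hn : 2 ≤ n) {a b : ℝ} (ha : 0 ≤ a)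
    (ha1 : a ≤ 1) (hb0 : 0 ≤ b) (hb : b ^ 2 = a ^ 2 + 4 * (1 - a ^ 2) / (n + 2)) :
    (1 - exp (-2)) * (1 - a ^ 2) ^ (((n : ℝ) + 2) / 2) / ((n + 2) * b)
      ≤ ∫ t in a..b, √(1 - t ^ 2) ^ n := by
  have hn' : (2 : ℝ) ≤ n := by exact_mod_cast hn
  have ha2 : 0 ≤ 1 - a ^ 2 := by nlinarith
  have hfrac : 4 / ((n : ℝ) + 2) ≤ 1 := by rw [div_le_one (by positivity)]; linarith
  have hsplit : 1 - b ^ 2 = (1 - a ^ 2) * (1 - 4 / (n + 2)) := by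
    rw [hb]; field_simp; ring
  have hab : a ≤ b := by
    refine (pow_le_pow_iff_left₀ ha hb0 two_ne_zero).1 ?_
    rw [hb]
    have : 0 ≤ 4 * (1 - a ^ 2) / ((n : ℝ) + 2) := by positivity
    linarith
  have hb1 : b ≤ 1 := by
    refine (pow_le_pow_iff_left₀ hb0 zero_le_one two_ne_zero).1 ?_
    nlinarith
  have hdecay : (1 - 4 / ((n : ℝ) + 2)) ^ (((n : ℝ) + 2) / 2) ≤ exp (-2) := by
    calc (1 - 4 / ((n : ℝ) + 2)) ^ (((n : ℝ) + 2) / 2)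
        ≤ exp (-(4 / ((n : ℝ) + 2))) ^ (((n : ℝ) + 2) / 2) := by
          gcongr
          linarith [add_one_le_exp (-(4 / ((n : ℝ) + 2)))]
      _ = exp (-2) := by
          rw [← exp_mul]; congr 1; field_simp; ring
  have hbdry : (1 - b ^ 2) ^ (((n : ℝ) + 2) / 2)
      ≤ exp (-2) * (1 - a ^ 2) ^ (((n : ℝ) + 2) / 2) := by
    rw [hsplit, mul_rpow ha2 (by linarith), mul_comm (exp (-2))]
    gcongr
  calc (1 - exp (-2)) * (1 - a ^ 2) ^ (((n : ℝ) + 2) / 2) / ((n + 2) * b)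
      ≤ ((1 - a ^ 2) ^ (((n : ℝ) + 2) / 2) - (1 - b ^ 2) ^ (((n : ℝ) + 2) / 2)) /
          ((n + 2) * b) := by
        gcongr
        linarith
    _ ≤ ∫ t in a..b, √(1 - t ^ 2) ^ n := integral_sqrt_one_sub_sq_pow_ge n ha hab hb1

lemma lintegral_sqrt_one_sub_sq_pow_le {n : ℕ} (hn : n ≠ 0) :
    ∫⁻ t : ℝ, ENNReal.ofReal (√(1 - t ^ 2) ^ n) ≤ ENNReal.ofReal (√(2 * π / n)) := by
  have hgauss : ∀ t : ℝ, √(1 - t ^ 2) ^ n ≤ exp (-(n / 2 : ℝ) * t ^ 2) := by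
    intro t
    have h1 : √(1 - t ^ 2) ≤ exp (-(t ^ 2) / 2) := by
      rw [sqrt_le_left (exp_pos _).le, ← exp_nat_mul]
      push_cast
      ring_nf
      linarith [add_one_le_exp (-(t ^ 2))]
    calc √(1 - t ^ 2) ^ n ≤ exp (-(t ^ 2) / 2) ^ n := by gcongr
      _ = exp (-(n / 2 : ℝ) * t ^ 2) := by rw [← exp_nat_mul]; ring_nf
  calc ∫⁻ t : ℝ, ENNReal.ofReal (√(1 - t ^ 2) ^ n)
      ≤ ∫⁻ t : ℝ, ENNReal.ofReal (exp (-(n / 2 : ℝ) * t ^ 2)) :=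
        lintegral_mono fun t => ENNReal.ofReal_le_ofReal (hgauss t)
    _ = ENNReal.ofReal (∫ t : ℝ, exp (-(n / 2 : ℝ) * t ^ 2)) :=
        (ofReal_integral_eq_lintegral_ofReal (integrable_exp_neg_mul_sq (by positivity))
          (ae_of_all _ fun t => (exp_pos _).le)).symm
    _ = ENNReal.ofReal (√(2 * π / n)) := by
        rw [integral_gaussian]
        congr 2
        field_simp

lemma two_mul_ofReal_integral_le_setLIntegral_abs_ge {f : ℝ → ℝ} (hf : Continuous f)
    (hf0 : ∀ t, 0 ≤ f t) (hfeven : ∀ t, f (-t) = f t) {a b : ℝ} (ha : 0 ≤ a) :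
    2 * ENNReal.ofReal (∫ t in a..b, f t) ≤ ∫⁻ t in {t | a ≤ |t|}, ENNReal.ofReal (f t) := by
  rcases lt_or_ge b a with hba | hab
  · rw [intervalIntegral.integral_symm, ENNReal.ofReal_of_nonpos
      (neg_nonpos.2 (intervalIntegral.integral_nonneg hba.le fun t _ => hf0 t)), mul_zero]
    exact zero_le
  have hIoc : ∀ {c d : ℝ}, c ≤ d →
      ENNReal.ofReal (∫ t in c..d, f t) = ∫⁻ t in Ioc c d, ENNReal.ofReal (f t) := fun hcd => by
    rw [intervalIntegral.integral_of_le hcd,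
      ofReal_integral_eq_lintegral_ofReal hf.integrableOn_Ioc (ae_of_all _ fun t => hf0 t)]
  have hdisj : Disjoint (Ioc a b) (Ioc (-b) (-a)) :=
    Set.disjoint_left.2 fun t h1 h2 => by linarith [h1.1, h2.2]
  have hsub : Ioc a b ∪ Ioc (-b) (-a) ⊆ {t | a ≤ |t|} := by
    rintro t (ht | ht)
    · exact (le_abs_self t).trans' ht.1.le
    · exact (neg_le_abs t).trans' (by linarith [ht.2])
  calc 2 * ENNReal.ofReal (∫ t in a..b, f t)
      = ENNReal.ofReal (∫ t in a..b, f t) + ENNReal.ofReal (∫ t in -b..-a, f t) := by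
        rw [two_mul, ← intervalIntegral.integral_comp_neg]
        simp only [hfeven]
    _ = ∫⁻ t in Ioc a b ∪ Ioc (-b) (-a), ENNReal.ofReal (f t) := by
        rw [hIoc hab, hIoc (neg_le_neg hab), lintegral_union measurableSet_Ioc hdisj]
    _ ≤ ∫⁻ t in {t | a ≤ |t|}, ENNReal.ofReal (f t) := lintegral_mono_set hsub

lemma unifSphere_apply {k : ℕ} (hk : k ≠ 0) {A : Set (sphere (0 : EuclideanSpace ℝ (Fin k)) 1)}
    (hA : MeasurableSet A) :
    unifSphere k A = volume (Ioo (0 : ℝ) 1 • ((↑) '' A : Set (EuclideanSpace ℝ (Fin k)))) /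
      volume (ball (0 : EuclideanSpace ℝ (Fin k)) 1) := by
  rw [unifSphere, Measure.smul_apply, smul_eq_mul, Measure.toSphere_apply' _ hA,
    Measure.toSphere_apply_univ, mul_comm, ← div_eq_mul_inv,
    ENNReal.mul_div_mul_left _ _ (by simpa using hk) (ENNReal.natCast_ne_top _)]

lemma exists_measurePreserving_inner_prod {n : ℕ} {x : EuclideanSpace ℝ (Fin (n + 1))}
    (hx : ‖x‖ = 1) :
    ∃ Φ : EuclideanSpace ℝ (Fin (n + 1)) → ℝ × EuclideanSpace ℝ (Fin n), MeasurePreserving Φ ∧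
      ∀ y, (Φ y).1 = ⟪y, x⟫ ∧ ‖y‖ ^ 2 = (Φ y).1 ^ 2 + ‖(Φ y).2‖ ^ 2 := by
  set e₀ := EuclideanSpace.single (0 : Fin (n + 1)) (1 : ℝ)
  set f := (ℝ ∙ (x - e₀))ᗮ.reflection
  have hfx : f x = e₀ := Submodule.reflection_sub (by simp [hx, e₀])
  refine ⟨fun y => (f y 0, WithLp.toLp 2 fun j => f y (Fin.succAbove 0 j)), ?_, fun y => ⟨?_, ?_⟩⟩
  · exact ((MeasurePreserving.id volume).prod (PiLp.volume_preserving_toLp _)).comp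
      ((volume_preserving_piFinSuccAbove _ 0).comp
        ((PiLp.volume_preserving_ofLp _).comp f.measurePreserving))
  · rw [← f.inner_map_map, hfx]
    simp [e₀, EuclideanSpace.inner_single_right]
  · rw [← f.norm_map, EuclideanSpace.norm_sq_eq, EuclideanSpace.norm_sq_eq, Fin.sum_univ_succ]
    simp

lemma volume_unitBall_inner_mem {n : ℕ} (hn : n ≠ 0) {x : EuclideanSpace ℝ (Fin (n + 1))}
    (hx : ‖x‖ = 1) {T : Set ℝ} (hT : MeasurableSet T) :
    volume {y : EuclideanSpace ℝ (Fin (n + 1)) | ‖y‖ < 1 ∧ ⟪y, x⟫ ∈ T} =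
      (∫⁻ t in T, ENNReal.ofReal (√(1 - t ^ 2) ^ n)) *
        volume (ball (0 : EuclideanSpace ℝ (Fin n)) 1) := by
  obtain ⟨Φ, hΦ, hΦx⟩ := exists_measurePreserving_inner_prod hx
  have : NeZero n := ⟨hn⟩
  set S : Set (ℝ × EuclideanSpace ℝ (Fin n)) := {p | p.1 ∈ T ∧ p.2 ∈ ball 0 √(1 - p.1 ^ 2)}
  have hS : MeasurableSet S :=
    (measurable_fst hT).inter (isOpen_lt (by fun_prop) (by fun_prop)).measurableSet
  have hpre : {y | ‖y‖ < 1 ∧ ⟪y, x⟫ ∈ T} = Φ ⁻¹' S := by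
    ext y
    obtain ⟨h1, h2⟩ := hΦx y
    simp only [S, mem_ofPred_eq, mem_preimage, mem_ball_zero_iff, h1,
      lt_sqrt (norm_nonneg _), ← sq_lt_one_iff₀ (norm_nonneg y), h2]
    exact ⟨fun ⟨hy, hyT⟩ => ⟨hyT, by linarith⟩, fun ⟨hyT, hz⟩ => ⟨by linarith, hyT⟩⟩
  have hslice : ∀ t, volume (Prod.mk t ⁻¹' S) =
      T.indicator (fun t => ENNReal.ofReal (√(1 - t ^ 2) ^ n) *
        volume (ball (0 : EuclideanSpace ℝ (Fin n)) 1)) t := by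
    intro t
    by_cases ht : t ∈ T
    · have hball := Measure.addHaar_ball volume (0 : EuclideanSpace ℝ (Fin n))
        (sqrt_nonneg (1 - t ^ 2))
      rw [finrank_euclideanSpace_fin] at hball
      rw [indicator_of_mem ht, ← hball]
      congr 1
      ext z
      simp [S, ht]
    · rw [indicator_of_notMem ht]
      convert measure_empty (μ := volume)
      ext z
      simp [S, ht]
  rw [hpre, hΦ.measure_preimage hS.nullMeasurableSet, Measure.volume_eq_prod,
    Measure.prod_apply hS]
  simp only [hslice]
  rw [lintegral_indicator hT, lintegral_mul_const _ (by fun_prop)]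

lemma volume_unitBall_abs_inner_ge_div_le_unifSphere {k : ℕ} (hk : k ≠ 0) {δ : ℝ} (hδ : 0 < δ)
    (x : EuclideanSpace ℝ (Fin k)) :
    volume {y : EuclideanSpace ℝ (Fin k) | ‖y‖ < 1 ∧ δ ≤ |⟪y, x⟫|} /
        volume (ball (0 : EuclideanSpace ℝ (Fin k)) 1) ≤
      unifSphere k {v | δ ≤ |⟪(v : EuclideanSpace ℝ (Fin k)), x⟫|} := by
  have hA : MeasurableSet {v : sphere (0 : EuclideanSpace ℝ (Fin k)) 1 |
      δ ≤ |⟪(v : EuclideanSpace ℝ (Fin k)), x⟫|} :=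
    measurableSet_le measurable_const (by fun_prop)
  rw [unifSphere_apply hk hA]
  gcongr
  rintro y ⟨hy1, hyδ⟩
  have hy0 : 0 < ‖y‖ := norm_pos_iff.2 <| by
    rintro rfl
    simp only [inner_zero_left, abs_zero] at hyδ
    linarith
  refine ⟨‖y‖, ⟨hy0, hy1⟩, ‖y‖⁻¹ • y, ⟨⟨‖y‖⁻¹ • y, ?_⟩, ?_, rfl⟩, smul_inv_smul₀ hy0.ne' y⟩
  · simp [norm_smul, hy0.ne']
  · change δ ≤ |⟪‖y‖⁻¹ • y, x⟫|
    rw [real_inner_smul_left, abs_mul, abs_inv, abs_norm]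
    exact hyδ.trans (le_mul_of_one_le_left (abs_nonneg _) ((one_le_inv₀ hy0).2 hy1.le))

lemma lintegral_abs_ge_div_le_unifSphere {n : ℕ} (hn : n ≠ 0)
    {x : EuclideanSpace ℝ (Fin (n + 1))} (hx : ‖x‖ = 1) {δ : ℝ} (hδ : 0 < δ) :
    (∫⁻ t in {t | δ ≤ |t|}, ENNReal.ofReal (√(1 - t ^ 2) ^ n)) /
        ∫⁻ t, ENNReal.ofReal (√(1 - t ^ 2) ^ n) ≤
      unifSphere (n + 1) {v | δ ≤ |⟪(v : EuclideanSpace ℝ (Fin (n + 1))), x⟫|} := by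
  have hball : ball (0 : EuclideanSpace ℝ (Fin (n + 1))) 1 = {y | ‖y‖ < 1 ∧ ⟪y, x⟫ ∈ univ} := by
    ext; simp
  have hcap : {y : EuclideanSpace ℝ (Fin (n + 1)) | ‖y‖ < 1 ∧ δ ≤ |⟪y, x⟫|} =
      {y | ‖y‖ < 1 ∧ ⟪y, x⟫ ∈ {t | δ ≤ |t|}} := rfl
  have hunivslice := volume_unitBall_inner_mem hn hx MeasurableSet.univ
  rw [Measure.restrict_univ] at hunivslice
  rw [← ENNReal.mul_div_mul_right _ _ (measure_ball_pos volume (0 : EuclideanSpace ℝ (Fin n))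
      one_pos).ne' measure_ball_lt_top.ne,
    ← volume_unitBall_inner_mem hn hx (measurableSet_le measurable_const measurable_abs),
    ← hunivslice, ← hcap, ← hball]
  exact volume_unitBall_abs_inner_ge_div_le_unifSphere n.succ_ne_zero hδ x

theorem stmt12 (k : ℕ) (δ : ℝ) (hδ : 0 < δ) (hδ' : δ ≤ 1 / Real.sqrt 2)
    (hk : 2 / δ ^ 2 ≤ (k : ℝ)) (x : EuclideanSpace ℝ (Fin k)) (hx : ‖x‖ = 1) :
    ENNReal.ofReal (Real.exp (-2 * δ ^ 2 * k)) ≤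
      unifSphere k {v | δ ≤ |⟪(v : EuclideanSpace ℝ (Fin k)), x⟫|} := by
  have hδ2 : δ ^ 2 ≤ 1 / 2 := by
    have := pow_le_pow_left₀ hδ.le hδ' 2
    rwa [div_pow, sq_sqrt zero_le_two, one_pow] at this
  have hδk : 2 ≤ δ ^ 2 * k := by rwa [div_le_iff₀ (by positivity), mul_comm] at hk
  have hk4 : (4 : ℝ) ≤ k := by nlinarith
  obtain ⟨n, rfl⟩ : ∃ n, k = n + 1 :=
    Nat.exists_eq_add_one.2 (by exact_mod_cast hk4.trans_lt' four_pos)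
  push_cast at hδk hk4 ⊢
  have hn2 : 2 ≤ n := by exact_mod_cast (by linarith : (2 : ℝ) ≤ n)
  set b := √(δ ^ 2 + 4 * (1 - δ ^ 2) / (n + 2))
  have hb : b ^ 2 = δ ^ 2 + 4 * (1 - δ ^ 2) / (n + 2) :=
    sq_sqrt (add_nonneg (sq_nonneg δ) (div_nonneg (by linarith) (by linarith)))
  have hs : 0 < √(2 * π / n) := sqrt_pos.2 (by positivity)
  refine le_trans ?_ (lintegral_abs_ge_div_le_unifSphere (by omega) hx hδ)
  calc ENNReal.ofReal (exp (-2 * δ ^ 2 * (n + 1)))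
      = ENNReal.ofReal (exp (-2 * δ ^ 2 * (n + 1)) * √(2 * π / n)) /
          ENNReal.ofReal (√(2 * π / n)) := by
        rw [← ENNReal.ofReal_div_of_pos hs, mul_div_cancel_right₀ _ hs.ne']
    _ ≤ 2 * ENNReal.ofReal (∫ t in δ..b, √(1 - t ^ 2) ^ n) /
          ∫⁻ t, ENNReal.ofReal (√(1 - t ^ 2) ^ n) := by
        refine ENNReal.div_le_div ?_ (lintegral_sqrt_one_sub_sq_pow_le (by omega))
        rw [← ENNReal.ofReal_ofNat 2, ← ENNReal.ofReal_mul zero_le_two]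
        refine ENNReal.ofReal_le_ofReal ((exp_neg_mul_sqrt_two_pi_div_le (by linarith)
          (by positivity) hδ2 hδk (sqrt_nonneg _) hb).trans ?_)
        gcongr
        exact integral_sqrt_one_sub_sq_pow_ge_of_sq_eq hn2 hδ.le (by nlinarith) (sqrt_nonneg _) hb
    _ ≤ (∫⁻ t in {t | δ ≤ |t|}, ENNReal.ofReal (√(1 - t ^ 2) ^ n)) /
          ∫⁻ t, ENNReal.ofReal (√(1 - t ^ 2) ^ n) := by
        gcongr
        exact two_mul_ofReal_integral_le_setLIntegral_abs_ge (by fun_prop)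
          (fun _ => by positivity) (fun t => by rw [neg_sq]) hδ.le
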